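/- arXiv:1509.05239 — 8 statements merged into one kernel-verified Lean document; each statement's English description precedes it below -/
import Mathlib

section
/- For the TRIP-Stern sequence for (e,e,e), the maximal terms lie on the left-most path of the tree: for every n and every word v ∈ {0,1}ⁿ, each of the three entries of Δ(v) is at most the third entry of f₀ⁿ(1,1,1); hence the maximum entry m_n of level n equals the third entry of f₀ⁿ(1,1,1). -/
/-- `f₀(a,b,c) = (b,c,a+c)`, i.e. right multiplication by `A₀` for `(e,e,e)`. -/
def f0 (p : ℤ × ℤ × ℤ) : ℤ × ℤ × ℤ := (p.2.1, p.2.2, p.1 + p.2.2)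

/-- `f₁(a,b,c) = (a,b,a+c)`, i.e. right multiplication by `A₁` for `(e,e,e)`. -/
def f1 (p : ℤ × ℤ × ℤ) : ℤ × ℤ × ℤ := (p.1, p.2.1, p.1 + p.2.2)

/-- One step of the TRIP-Stern tree: apply `f₁` on a `true` and `f₀` on a `false`. -/
def step (p : ℤ × ℤ × ℤ) (i : Bool) : ℤ × ℤ × ℤ := if i then f1 p else f0 p

/-- `Δ(v) = f_{iₙ}(⋯ f_{i₁}(1,1,1) ⋯)`, applying `f_{i₁}` first. -/
def delta (v : List Bool) : ℤ × ℤ × ℤ := v.foldl step (1, 1, 1)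

/-- The maximum coordinate of a triple. -/
def maxEntry (p : ℤ × ℤ × ℤ) : ℤ := max p.1 (max p.2.1 p.2.2)

/-- `m n` is the maximum entry of level `n` of the TRIP-Stern sequence for `(e,e,e)`. -/
noncomputable def m (n : ℕ) : ℤ :=
  Finset.sup' Finset.univ Finset.univ_nonempty
    (fun v : Fin n → Bool => maxEntry (delta (List.ofFn v)))

/-!
For the componentwise order on `ℤ × ℤ × ℤ`, `f₀` and `f₁` are monotone, and on a sorted
triple `a ≤ b ≤ c` we have `f₁(a,b,c) = (a,b,a+c) ≤ (b,c,a+c) = f₀(a,b,c)`. As `f₀` keeps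
nonnegative triples sorted, induction along the word gives `Δ(v) ≤ f₀ⁿ(1,1,1)`
componentwise, and the largest entry of the sorted triple `f₀ⁿ(1,1,1)` is its third one.
-/

def IsSortedNonneg (p : ℤ × ℤ × ℤ) : Prop :=
  0 ≤ p.1 ∧ p.1 ≤ p.2.1 ∧ p.2.1 ≤ p.2.2

theorem isSortedNonneg_one_one_one : IsSortedNonneg (1, 1, 1) := by
  norm_num [IsSortedNonneg]

theorem IsSortedNonneg.map_f0 {p : ℤ × ℤ × ℤ} (hp : IsSortedNonneg p) : IsSortedNonneg (f0 p) := by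
  obtain ⟨h₁, h₂, h₃⟩ := hp
  exact ⟨h₁.trans h₂, h₃, le_add_of_nonneg_left h₁⟩

theorem IsSortedNonneg.iterate_f0 {p : ℤ × ℤ × ℤ} (hp : IsSortedNonneg p) (n : ℕ) :
    IsSortedNonneg (f0^[n] p) :=
  Function.Iterate.rec IsSortedNonneg hp (fun _ => IsSortedNonneg.map_f0) n

theorem IsSortedNonneg.maxEntry_eq {p : ℤ × ℤ × ℤ} (hp : IsSortedNonneg p) :
    maxEntry p = p.2.2 := by
  obtain ⟨-, h₂, h₃⟩ := hp
  simp only [maxEntry, max_eq_right h₃, max_eq_right (h₂.trans h₃)]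

theorem maxEntry_mono : Monotone maxEntry :=
  fun _ _ ⟨h₁, h₂, h₃⟩ => max_le_max h₁ (max_le_max h₂ h₃)

theorem f0_mono : Monotone f0 :=
  fun _ _ ⟨h₁, h₂, h₃⟩ => ⟨h₂, h₃, add_le_add h₁ h₃⟩

theorem f1_mono : Monotone f1 :=
  fun _ _ ⟨h₁, h₂, h₃⟩ => ⟨h₁, h₂, add_le_add h₁ h₃⟩

theorem step_mono (i : Bool) : Monotone (step · i) := by
  cases i
  exacts [f0_mono, f1_mono]

theorem f1_le_f0 {p : ℤ × ℤ × ℤ} (h₁ : p.1 ≤ p.2.1) (h₂ : p.2.1 ≤ p.2.2) : f1 p ≤ f0 p :=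
  ⟨h₁, h₂, le_rfl⟩

theorem step_le_f0 {p q : ℤ × ℤ × ℤ} (hp : IsSortedNonneg p) (hqp : q ≤ p) (i : Bool) :
    step q i ≤ f0 p := by
  refine (step_mono i hqp).trans ?_
  cases i
  exacts [le_rfl, f1_le_f0 hp.2.1 hp.2.2]

theorem foldl_step_le_iterate_f0 (v : List Bool) {p q : ℤ × ℤ × ℤ} (hp : IsSortedNonneg p)
    (hqp : q ≤ p) : v.foldl step q ≤ f0^[v.length] p := by
  induction v generalizing p q with
  | nil => exact hqp
  | cons i v ih =>
    rw [List.foldl_cons, List.length_cons, Function.iterate_succ_apply]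
    exact ih hp.map_f0 (step_le_f0 hp hqp i)

theorem foldl_step_replicate_false (n : ℕ) (p : ℤ × ℤ × ℤ) :
    (List.replicate n false).foldl step p = f0^[n] p := by
  rw [List.foldl_ext step (fun q _ => f0 q) p (fun q b hb => by rw [List.eq_of_mem_replicate hb]; rfl),
    List.foldl_const, List.length_replicate]

/-- For the TRIP-Stern sequence for `(e,e,e)`, the maximal terms lie on the left-most
path of the tree: every entry of every level-`n` triple `Δ(v)` is at most the third
entry of `f₀ⁿ(1,1,1)`, and hence the maximum entry `m n` of level `n` equals the third
entry of `f₀ⁿ(1,1,1)`. -/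
theorem maxTerms_leftmost_eee :
    (∀ (n : ℕ) (v : Fin n → Bool),
      (delta (List.ofFn v)).1 ≤ (f0^[n] (1, 1, 1)).2.2 ∧
      (delta (List.ofFn v)).2.1 ≤ (f0^[n] (1, 1, 1)).2.2 ∧
      (delta (List.ofFn v)).2.2 ≤ (f0^[n] (1, 1, 1)).2.2) ∧
    (∀ n : ℕ, m n = (f0^[n] (1, 1, 1)).2.2) := by
  have hsorted (n : ℕ) := isSortedNonneg_one_one_one.iterate_f0 n
  have hmax (n : ℕ) (v : Fin n → Bool) :
      maxEntry (delta (List.ofFn v)) ≤ (f0^[n] (1, 1, 1)).2.2 := by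
    have hle := foldl_step_le_iterate_f0 (List.ofFn v) isSortedNonneg_one_one_one le_rfl
    rw [List.length_ofFn] at hle
    exact (maxEntry_mono hle).trans_eq (hsorted n).maxEntry_eq
  refine ⟨fun n v => ?_, fun n => le_antisymm ?_ ?_⟩
  · simpa only [maxEntry, max_le_iff] using hmax n v
  · exact Finset.sup'_le _ _ fun v _ => hmax n v
  · refine Finset.le_sup'_of_le _ (Finset.mem_univ fun _ => false) (le_of_eq ?_)
    rw [List.ofFn_const, delta, foldl_step_replicate_false, (hsorted n).maxEntry_eq]
end

section
/- For the TRIP-Stern sequence for (e,e,e), the sequence (m_n) of maximum entries of the levels satisfies m_0 = 1, m_1 = 2, m_2 = 3, and the recurrence m_n = m_{n-1} + m_{n-3} for all n ≥ 3. -/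
/-!
Every level attains its maximum at the word `0ⁿ`. Indeed, with Narayana's cows sequence
`N₀ = N₁ = N₂ = 1`, `N_{k+3} = N_{k+2} + N_k`, one has `Δ(0ⁿ) = (N_n, N_{n+1}, N_{n+2})`, and this
triple dominates every `Δ(v)` with `|v| = n` coordinatewise, because `f₀ p` and `f₁ p` are both
bounded by `f₀ q` whenever `p ≤ q` and `q` is sorted. Hence `m_n = N_{n+2}`, and the recurrence
is that of `N`.
-/

def narayana : ℕ → ℕ
  | 0 => 1
  | 1 => 1
  | 2 => 1
  | n + 3 => narayana (n + 2) + narayana n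

theorem narayana_monotone : Monotone narayana := by
  refine monotone_nat_of_le_succ fun n => ?_
  match n with
  | 0 | 1 => simp [narayana]
  | n + 2 => exact Nat.le_add_right _ _

def narayanaTriple (n : ℕ) : ℤ × ℤ × ℤ := (narayana n, narayana (n + 1), narayana (n + 2))

theorem f0_narayanaTriple (n : ℕ) : f0 (narayanaTriple n) = narayanaTriple (n + 1) := by
  simp only [f0, narayanaTriple, narayana, Prod.mk.injEq, Nat.cast_add, true_and]
  ring

theorem maxEntry_narayanaTriple (n : ℕ) : maxEntry (narayanaTriple n) = narayana (n + 2) := by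
  have h₀ := narayana_monotone (by omega : n ≤ n + 2)
  have h₁ := narayana_monotone (by omega : n + 1 ≤ n + 2)
  simp only [maxEntry, narayanaTriple]
  omega

theorem step_le_f0_s5 {p q : ℤ × ℤ × ℤ} (i : Bool) (hpq : p ≤ q)
    (hq₁ : q.1 ≤ q.2.1) (hq₂ : q.2.1 ≤ q.2.2) : step p i ≤ f0 q := by
  obtain ⟨h₁, h₂, h₃⟩ := hpq
  cases i <;> simp only [step, f0, f1, Bool.false_eq_true, ↓reduceIte, Prod.mk_le_mk] <;> omega

theorem delta_append_singleton (v : List Bool) (i : Bool) :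
    delta (v ++ [i]) = step (delta v) i := by
  simp [delta, List.foldl_append]

theorem delta_le_narayanaTriple (v : List Bool) : delta v ≤ narayanaTriple v.length := by
  induction v using List.reverseRecOn with
  | nil => simp [delta, narayanaTriple, narayana]
  | append_singleton v i ih =>
    rw [delta_append_singleton, List.length_append, List.length_singleton,
      ← f0_narayanaTriple]
    exact step_le_f0_s5 i ih (Nat.cast_le.mpr (narayana_monotone (Nat.le_succ _)))
      (Nat.cast_le.mpr (narayana_monotone (Nat.le_succ _)))

theorem delta_replicate_false (n : ℕ) :
    delta (List.replicate n false) = narayanaTriple n := by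
  induction n with
  | zero => simp [delta, narayanaTriple, narayana]
  | succ n ih =>
    rw [List.replicate_succ', delta_append_singleton, ih, ← f0_narayanaTriple]
    rfl

theorem m_eq_narayana (n : ℕ) : m n = narayana (n + 2) := by
  rw [← maxEntry_narayanaTriple]
  apply le_antisymm
  · refine Finset.sup'_le _ _ fun v _ => maxEntry_mono ?_
    simpa using delta_le_narayanaTriple (List.ofFn v)
  · have hmax := Finset.le_sup' (fun v : Fin n → Bool => maxEntry (delta (List.ofFn v)))
      (Finset.mem_univ fun _ => false)
    rwa [List.ofFn_const, delta_replicate_false] at hmax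

/-- For the TRIP-Stern sequence for `(e,e,e)`, the sequence of maximum entries of the
levels satisfies `m 0 = 1`, `m 1 = 2`, `m 2 = 3`, and `m n = m (n-1) + m (n-3)` for all
`n ≥ 3`. -/
theorem maxTerms_recurrence_eee :
    m 0 = 1 ∧ m 1 = 2 ∧ m 2 = 3 ∧
    (∀ n : ℕ, 3 ≤ n → m n = m (n - 1) + m (n - 3)) := by
  simp only [m_eq_narayana]
  refine ⟨rfl, rfl, rfl, fun n hn => ?_⟩
  obtain ⟨k, rfl⟩ := Nat.exists_eq_add_of_le' hn
  rw [show k + 3 - 1 = k + 2 by omega, Nat.add_sub_cancel]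
  exact_mod_cast narayana.eq_4 (k + 2)
end

section
/- For the TRIP-Stern sequence for (e,e,e), the minimal terms lie on the right-most path of the tree and all have value 1: for every n, every entry of every triple Δ(v) with v ∈ {0,1}ⁿ is at least 1, and the right-most triple satisfies f₁ⁿ(1,1,1) = (1,1,n+1), so the minimum entry of level n equals 1. -/
/-- The minimum coordinate of a triple. -/
def minEntry (p : ℤ × ℤ × ℤ) : ℤ := min p.1 (min p.2.1 p.2.2)

/-! Both maps only permute entries or add a positive entry to one, so every triple of the tree
has all entries `≥ 1` (in the product order, `1 ≤ p`). Along the right-most path `f₁` keeps the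
first two entries equal to `1`, which gives the minimum. -/

lemma one_le_triple_iff (p : ℤ × ℤ × ℤ) : 1 ≤ p ↔ 1 ≤ p.1 ∧ 1 ≤ p.2.1 ∧ 1 ≤ p.2.2 := by
  simp only [Prod.le_def, Prod.fst_one, Prod.snd_one]

lemma one_le_step {p : ℤ × ℤ × ℤ} (hp : 1 ≤ p) (i : Bool) : 1 ≤ step p i := by
  obtain ⟨ha, hb, hc⟩ := (one_le_triple_iff p).mp hp
  rw [one_le_triple_iff]
  cases i
  · exact ⟨hb, hc, show 1 ≤ p.1 + p.2.2 by omega⟩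
  · exact ⟨ha, hb, show 1 ≤ p.1 + p.2.2 by omega⟩

lemma one_le_foldl_step (v : List Bool) {p : ℤ × ℤ × ℤ} (hp : 1 ≤ p) :
    1 ≤ v.foldl step p :=
  List.foldlRecOn (motive := (1 ≤ ·)) v step hp fun _ hq i _ => one_le_step hq i

lemma one_le_delta (v : List Bool) : 1 ≤ delta v :=
  one_le_foldl_step v le_rfl

lemma f1_iterate (n : ℕ) (a b c : ℤ) : f1^[n] (a, b, c) = (a, b, c + n * a) := by
  induction n with
  | zero => simp
  | succ k ih =>
    rw [Function.iterate_succ_apply', ih, f1]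
    simp only [Prod.mk.injEq, true_and]
    push_cast
    ring

lemma foldl_step_replicate_true (n : ℕ) (p : ℤ × ℤ × ℤ) :
    (List.replicate n true).foldl step p = f1^[n] p := by
  induction n generalizing p with
  | zero => rfl
  | succ k ih => exact ih (f1 p)

lemma delta_replicate_true (n : ℕ) : delta (List.replicate n true) = (1, 1, (n : ℤ) + 1) := by
  rw [delta, foldl_step_replicate_true, f1_iterate, mul_one, add_comm]

lemma one_le_minEntry {p : ℤ × ℤ × ℤ} (hp : 1 ≤ p) : 1 ≤ minEntry p := by
  obtain ⟨ha, hb, hc⟩ := (one_le_triple_iff p).mp hp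
  exact le_min ha (le_min hb hc)

lemma minEntry_one_one (c : ℤ) (hc : 1 ≤ c) : minEntry (1, 1, c) = 1 := by
  simp only [minEntry, min_eq_left hc, min_self]

/-- For the TRIP-Stern sequence for `(e,e,e)`, the minimal terms lie on the right-most
path and all have value `1`: every entry of every level-`n` triple `Δ(v)` is at least
`1`, the right-most triple is `f₁ⁿ(1,1,1) = (1,1,n+1)`, and the minimum entry of each
level equals `1`. -/
theorem minTerms_rightmost_eee :
    (∀ (n : ℕ) (v : Fin n → Bool),
      1 ≤ (delta (List.ofFn v)).1 ∧
      1 ≤ (delta (List.ofFn v)).2.1 ∧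
      1 ≤ (delta (List.ofFn v)).2.2) ∧
    (∀ n : ℕ, f1^[n] (1, 1, 1) = ((1 : ℤ), (1 : ℤ), (n : ℤ) + 1)) ∧
    (∀ n : ℕ,
      Finset.inf' Finset.univ Finset.univ_nonempty
        (fun v : Fin n → Bool => minEntry (delta (List.ofFn v))) = 1) := by
  refine ⟨fun n v => (one_le_triple_iff _).mp (one_le_delta _), fun n => ?_, fun n => ?_⟩
  · rw [f1_iterate, mul_one, add_comm]
  · apply le_antisymm
    · calc _ ≤ minEntry (delta (List.ofFn fun _ : Fin n => true)) :=
            Finset.inf'_le _ (Finset.mem_univ fun _ => true)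
        _ = 1 := by
          rw [List.ofFn_const, delta_replicate_true]
          exact minEntry_one_one _ (by omega)
    · exact Finset.le_inf' _ _ fun v _ => one_le_minEntry (one_le_delta _)
end

section
/- For the TRIP-Stern sequence for (e,e,e), let α be the real number satisfying α³ − 4α² + 5α − 4 = 0 (the unique real zero of x³ − 4x² + 5x − 4). Then, as n → ∞, S_i(n)/S_i(n−1) → α for each i ∈ {1,2,3}, and S(n)/S(n−1) → α, where the ratios are taken in ℝ. -/
/-!
One step down the tree acts on the level sums linearly,
`(S₁, S₂, S₃) ↦ (S₁ + S₂, S₂ + S₃, 2S₁ + 2S₃)`, with characteristic polynomial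
`x³ - 4x² + 5x - 4 = (x - α)(x² - (4 - α)x + 4/α)`. Hence every level sum `s` satisfies
`s (n+2) - (4 - α) s (n+1) + (4/α) s n = u αⁿ`, so `s n / αⁿ` obeys a second-order linear
recurrence whose homogeneous part has complex roots of squared modulus `4/α³ < 1`. A quadratic
energy of that part decays geometrically, so `s n / αⁿ` converges to a limit, which is nonzero
when `u ≠ 0`; the ratios `s (n+1) / s n` then tend to `α`.
-/

open Filter Topology

/-- `S₁ n` is the sum of the first coordinates of the level-`n` triples. -/
def S1 (n : ℕ) : ℤ := ∑ v : Fin n → Bool, (delta (List.ofFn v)).1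

/-- `S₂ n` is the sum of the second coordinates of the level-`n` triples. -/
def S2 (n : ℕ) : ℤ := ∑ v : Fin n → Bool, (delta (List.ofFn v)).2.1

/-- `S₃ n` is the sum of the third coordinates of the level-`n` triples. -/
def S3 (n : ℕ) : ℤ := ∑ v : Fin n → Bool, (delta (List.ofFn v)).2.2

/-- `S n = S₁ n + S₂ n + S₃ n` is the sum of all entries of level `n`. -/
def S (n : ℕ) : ℤ := S1 n + S2 n + S3 n

theorem delta_ofFn_snoc {n : ℕ} (v : Fin n → Bool) (b : Bool) :
    delta (List.ofFn (Fin.snoc v b : Fin (n + 1) → Bool)) = step (delta (List.ofFn v)) b := by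
  rw [List.ofFn_succ']
  simp [delta]

theorem sum_level_succ {M : Type*} [AddCommMonoid M] (g : ℤ × ℤ × ℤ → M) (n : ℕ) :
    ∑ v : Fin (n + 1) → Bool, g (delta (List.ofFn v)) =
      ∑ v : Fin n → Bool, (g (f0 (delta (List.ofFn v))) + g (f1 (delta (List.ofFn v)))) := by
  rw [← (Fin.snocEquiv fun _ => Bool).sum_comp, Fintype.sum_prod_type_right]
  refine Finset.sum_congr rfl fun v _ => ?_
  simp only [Fin.snocEquiv, Equiv.coe_fn_mk, delta_ofFn_snoc, Fintype.sum_bool, step, if_true,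
    Bool.false_eq_true, if_false, add_comm]

theorem S1_succ (n : ℕ) : S1 (n + 1) = S1 n + S2 n := by
  rw [S1, sum_level_succ Prod.fst, S1, S2, ← Finset.sum_add_distrib]
  exact Finset.sum_congr rfl fun v _ => add_comm _ _

theorem S2_succ (n : ℕ) : S2 (n + 1) = S2 n + S3 n := by
  rw [S2, sum_level_succ (·.2.1), S2, S3, ← Finset.sum_add_distrib]
  exact Finset.sum_congr rfl fun v _ => add_comm _ _

theorem S3_succ (n : ℕ) : S3 (n + 1) = 2 * S1 n + 2 * S3 n := by
  rw [S3, sum_level_succ (·.2.2), S1, S3, Finset.mul_sum, Finset.mul_sum,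
    ← Finset.sum_add_distrib]
  exact Finset.sum_congr rfl fun v _ => by simp only [f0, f1]; ring

theorem S1_add_three (n : ℕ) : S1 (n + 3) = 4 * S1 (n + 2) - 5 * S1 (n + 1) + 4 * S1 n := by
  linarith [S1_succ n, S1_succ (n + 1), S1_succ (n + 2), S2_succ n, S2_succ (n + 1), S3_succ n]

theorem S2_add_three (n : ℕ) : S2 (n + 3) = 4 * S2 (n + 2) - 5 * S2 (n + 1) + 4 * S2 n := by
  linarith [S1_succ n, S1_succ (n + 1), S2_succ n, S2_succ (n + 1), S2_succ (n + 2), S3_succ n,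
    S3_succ (n + 1)]

theorem S3_add_three (n : ℕ) : S3 (n + 3) = 4 * S3 (n + 2) - 5 * S3 (n + 1) + 4 * S3 n := by
  linarith [S1_succ n, S1_succ (n + 1), S2_succ n, S3_succ n, S3_succ (n + 1), S3_succ (n + 2)]

theorem S_add_three (n : ℕ) : S (n + 3) = 4 * S (n + 2) - 5 * S (n + 1) + 4 * S n := by
  simp only [S]
  linear_combination S1_add_three n + S2_add_three n + S3_add_three n

theorem one_sub_add_pos_of_sq_lt {p q : ℝ} (hpq : p ^ 2 < 4 * q) : 0 < 1 - p + q := by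
  nlinarith [sq_nonneg (p - 2)]

theorem tendsto_zero_of_damped_recurrence {p q : ℝ} {w : ℕ → ℝ} (hq : q < 1)
    (hpq : p ^ 2 < 4 * q) (hw : ∀ n, w (n + 2) = p * w (n + 1) - q * w n) :
    Tendsto w atTop (𝓝 0) := by
  set E : ℕ → ℝ := fun n => w (n + 1) ^ 2 - p * w (n + 1) * w n + q * w n ^ 2
  have hE : ∀ n, E n = q ^ n * E 0 := by
    intro n
    induction n with
    | zero => simp
    | succ n ih =>
      rw [pow_succ, mul_right_comm, ← ih]
      simp only [E, hw]
      ring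
  have hk : 0 < q - p ^ 2 / 4 := by linarith
  have hq0 : 0 ≤ q := by nlinarith [sq_nonneg p]
  have hcoercive : ∀ n, (q - p ^ 2 / 4) * w n ^ 2 ≤ E n := fun n => by
    simp only [E]
    nlinarith [sq_nonneg (w (n + 1) - p / 2 * w n)]
  have hsq : Tendsto (fun n => w n ^ 2) atTop (𝓝 0) := by
    have hgeom :=
      (tendsto_pow_atTop_nhds_zero_of_lt_one hq0 hq).mul_const (E 0 / (q - p ^ 2 / 4))
    rw [zero_mul] at hgeom
    refine squeeze_zero (fun n => sq_nonneg _) (fun n => ?_) hgeom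
    rw [← mul_div_assoc, le_div_iff₀ hk, mul_comm, ← hE]
    exact hcoercive n
  have habs := hsq.sqrt
  simp only [Real.sqrt_sq_eq_abs, Real.sqrt_zero] at habs
  exact (tendsto_zero_iff_abs_tendsto_zero w).mpr habs

theorem tendsto_of_damped_recurrence {p q c : ℝ} {r : ℕ → ℝ} (hq : q < 1)
    (hpq : p ^ 2 < 4 * q) (hr : ∀ n, r (n + 2) = p * r (n + 1) - q * r n + c) :
    Tendsto r atTop (𝓝 (c / (1 - p + q))) := by
  have hden := one_sub_add_pos_of_sq_lt hpq
  have hw : Tendsto (fun n => r n - c / (1 - p + q)) atTop (𝓝 0) :=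
    tendsto_zero_of_damped_recurrence hq hpq fun n => by
      rw [hr]; field_simp; ring
  simpa using hw.add_const (c / (1 - p + q))

theorem tendsto_succ_div_of_tendsto_div_pow {s : ℕ → ℝ} {α A : ℝ} (hα : α ≠ 0) (hA : A ≠ 0)
    (h : Tendsto (fun n => s n / α ^ n) atTop (𝓝 A)) :
    Tendsto (fun n => s (n + 1) / s n) atTop (𝓝 α) := by
  have hlim := ((h.comp (tendsto_add_atTop_nat 1)).div h hA).const_mul α
  rw [div_self hA, mul_one] at hlim
  refine hlim.congr fun n => ?_
  simp only [Pi.div_apply, Function.comp_apply, pow_succ, mul_comm _ α, ← div_div,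
    div_div_div_cancel_right₀ (pow_ne_zero n hα), mul_div_assoc', mul_div_cancel_left₀ _ hα]

theorem two_lt_of_cubic_eq_zero {α : ℝ} (hα : α ^ 3 - 4 * α ^ 2 + 5 * α - 4 = 0) : 2 < α := by
  nlinarith [sq_nonneg (α - 1)]

theorem tendsto_succ_div_of_recurrence {α : ℝ} (hα : α ^ 3 - 4 * α ^ 2 + 5 * α - 4 = 0)
    {s : ℕ → ℝ}
    (hs : ∀ n, s (n + 3) = 4 * s (n + 2) - 5 * s (n + 1) + 4 * s n)
    (hu : s 2 - (4 - α) * s 1 + 4 / α * s 0 ≠ 0) :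
    Tendsto (fun n => s (n + 1) / s n) atTop (𝓝 α) := by
  have hα2 := two_lt_of_cubic_eq_zero hα
  have hα0 : α ≠ 0 := by positivity
  set u := s 2 - (4 - α) * s 1 + 4 / α * s 0
  have hgeom : ∀ n, s (n + 2) - (4 - α) * s (n + 1) + 4 / α * s n = u * α ^ n := by
    intro n
    induction n with
    | zero => simp [u]
    | succ n ih =>
      rw [pow_succ, ← mul_assoc, ← ih, hs]
      field_simp
      linear_combination (-s (n + 1)) * hα
  have hnorm : ∀ n, s (n + 2) / α ^ (n + 2) =
      (4 - α) / α * (s (n + 1) / α ^ (n + 1)) - 4 / α ^ 3 * (s n / α ^ n) + u / α ^ 2 := by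
    intro n
    rw [show s (n + 2) = (4 - α) * s (n + 1) - 4 / α * s n + u * α ^ n by linarith [hgeom n]]
    field_simp
    ring
  have hq : 4 / α ^ 3 < 1 := by
    rw [div_lt_one (by positivity)]; nlinarith
  have hpq : ((4 - α) / α) ^ 2 < 4 * (4 / α ^ 3) := by
    rw [div_pow, ← sub_pos]
    field_simp
    nlinarith [sq_nonneg (8 * α - 11)]
  refine tendsto_succ_div_of_tendsto_div_pow hα0 ?_ (tendsto_of_damped_recurrence hq hpq hnorm)
  exact div_ne_zero (div_ne_zero hu (by positivity)) (one_sub_add_pos_of_sq_lt hpq).ne'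

theorem tendsto_succ_div_of_int_recurrence {α : ℝ} (hα : α ^ 3 - 4 * α ^ 2 + 5 * α - 4 = 0)
    {s : ℕ → ℤ}
    (hs : ∀ n, s (n + 3) = 4 * s (n + 2) - 5 * s (n + 1) + 4 * s n)
    (h0 : 0 < s 0) (h1 : 0 ≤ s 1) (h12 : 2 * s 1 ≤ s 2) :
    Tendsto (fun n => (s (n + 1) : ℝ) / s n) atTop (𝓝 α) := by
  refine tendsto_succ_div_of_recurrence hα (s := fun n => (s n : ℝ))
    (fun n => by exact_mod_cast hs n) (ne_of_gt ?_)
  have hα2 := two_lt_of_cubic_eq_zero hα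
  have : (0 : ℝ) < 4 / α * s 0 := by positivity
  have : (0 : ℝ) ≤ (α - 2) * s 1 := by positivity
  have : (2 : ℝ) * s 1 ≤ s 2 := by exact_mod_cast h12
  linarith

/-- For the TRIP-Stern sequence for `(e,e,e)`, if `α` is the real zero of
`x³ − 4x² + 5x − 4`, then `Sᵢ(n)/Sᵢ(n−1) → α` for `i = 1, 2, 3` and
`S(n)/S(n−1) → α` as `n → ∞`. -/
theorem levelSum_ratio_tendsto_eee (α : ℝ)
    (hα : α ^ 3 - 4 * α ^ 2 + 5 * α - 4 = 0) :
    Tendsto (fun n : ℕ => (S1 (n + 1) : ℝ) / (S1 n : ℝ)) atTop (𝓝 α) ∧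
    Tendsto (fun n : ℕ => (S2 (n + 1) : ℝ) / (S2 n : ℝ)) atTop (𝓝 α) ∧
    Tendsto (fun n : ℕ => (S3 (n + 1) : ℝ) / (S3 n : ℝ)) atTop (𝓝 α) ∧
    Tendsto (fun n : ℕ => (S (n + 1) : ℝ) / (S n : ℝ)) atTop (𝓝 α) :=
  ⟨tendsto_succ_div_of_int_recurrence hα S1_add_three (by decide) (by decide) (by decide),
    tendsto_succ_div_of_int_recurrence hα S2_add_three (by decide) (by decide) (by decide),
    tendsto_succ_div_of_int_recurrence hα S3_add_three (by decide) (by decide) (by decide),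
    tendsto_succ_div_of_int_recurrence hα S_add_three (by decide) (by decide) (by decide)⟩
end

section
/- Every term of the TRIP-Stern sequence for (e,e,e) lies in P: for every nonempty word v = (i₁,…,iₙ) ∈ {0,1}ⁿ with n ≥ 1, the triple Δ(v) = (a,b,c) satisfies 0 < a ≤ b < c. -/
/-!
The condition `0 < a ≤ b < c` is invariant under both `f₀` and `f₁`, since adding the positive
entry `a` to `c` keeps the last entry strictly largest. Although `(1,1,1)` violates it, both maps
send `(1,1,1)` to `(1,1,2)`, which satisfies it; so after the first letter of `v` the invariant
holds and is propagated along the rest of the word.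
-/

/-- The set `P` of potential entries without `(1,1,1)`. -/
def IsIncreasingTriple (p : ℤ × ℤ × ℤ) : Prop := 0 < p.1 ∧ p.1 ≤ p.2.1 ∧ p.2.1 < p.2.2

namespace IsIncreasingTriple

variable {p : ℤ × ℤ × ℤ}

theorem f0 (hp : IsIncreasingTriple p) : IsIncreasingTriple (f0 p) := by
  obtain ⟨ha, hab, hbc⟩ := hp
  exact ⟨ha.trans_le hab, hbc.le, by simp only [_root_.f0]; omega⟩

theorem f1 (hp : IsIncreasingTriple p) : IsIncreasingTriple (f1 p) := by
  obtain ⟨ha, hab, hbc⟩ := hp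
  exact ⟨ha, hab, by simp only [_root_.f1]; omega⟩

theorem step (hp : IsIncreasingTriple p) (i : Bool) : IsIncreasingTriple (step p i) := by
  cases i
  · exact hp.f0
  · exact hp.f1

theorem foldl_step (hp : IsIncreasingTriple p) (v : List Bool) :
    IsIncreasingTriple (v.foldl _root_.step p) := by
  induction v generalizing p with
  | nil => exact hp
  | cons i v ih => exact ih (hp.step i)

end IsIncreasingTriple

theorem step_one_one_one (i : Bool) : step (1, 1, 1) i = (1, 1, 2) := by
  cases i <;> rfl

theorem delta_cons (i : Bool) (v : List Bool) : delta (i :: v) = v.foldl step (1, 1, 2) := by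
  rw [delta, List.foldl_cons, step_one_one_one]

/-- Every term of the TRIP-Stern sequence for `(e,e,e)` coming from a nonempty word
`v` satisfies `0 < a ≤ b < c`, where `Δ(v) = (a,b,c)`; hence it lies in the set `P`
of potential entries. -/
theorem tripStern_mem_P (v : List Bool) (hv : v ≠ []) :
    0 < (delta v).1 ∧ (delta v).1 ≤ (delta v).2.1 ∧ (delta v).2.1 < (delta v).2.2 := by
  obtain ⟨i, v, rfl⟩ := List.exists_cons_of_ne_nil hv
  have h112 : IsIncreasingTriple (1, 1, 2) := by norm_num [IsIncreasingTriple]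
  rw [delta_cons]
  exact h112.foldl_step v
end

section
/- If (a,b,c) ∈ P and (a,b,c) ≠ (1,1,2), then at most one of the triples (a,b,c)·A₁⁻¹ = (a,b,c−a) and (a,b,c)·A₀⁻¹ = (c−b,a,b) lies in P; that is, it is not the case that both (a,b,c−a) ∈ P and (c−b,a,b) ∈ P. -/
/-- The set `P` of potential entries:
`P = {(a,b,c) ∈ ℤ³ : 0 < a ≤ b < c} ∪ {(1,1,1)}`. -/
def P : Set (ℤ × ℤ × ℤ) :=
  {p | 0 < p.1 ∧ p.1 ≤ p.2.1 ∧ p.2.1 < p.2.2} ∪ {(1, 1, 1)}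

/-! Membership of `(a,b,c-a)` in `P` forces `c > a + b`, membership of `(c-b,a,b)` forces
`c ≤ a + b`, except when one of them is the exceptional entry `(1,1,1)`; either way this pins
down `(a,b,c) = (1,1,2)`. -/

theorem mem_P_iff {x y z : ℤ} :
    ((x, y, z) : ℤ × ℤ × ℤ) ∈ P ↔ (0 < x ∧ x ≤ y ∧ y < z) ∨ (x = 1 ∧ y = 1 ∧ z = 1) := by
  simp [P, or_comm]

theorem add_lt_of_mem_P_of_ne {a b c : ℤ} (hP : ((a, b, c - a) : ℤ × ℤ × ℤ) ∈ P)
    (hne : ((a, b, c) : ℤ × ℤ × ℤ) ≠ (1, 1, 2)) : a + b < c := by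
  simp only [ne_eq, Prod.mk.injEq] at hne
  rcases mem_P_iff.mp hP with ⟨-, -, hbc⟩ | ⟨rfl, rfl, hc⟩ <;> omega

theorem le_add_of_mem_P_of_ne {a b c : ℤ} (hP : ((c - b, a, b) : ℤ × ℤ × ℤ) ∈ P)
    (hne : ((a, b, c) : ℤ × ℤ × ℤ) ≠ (1, 1, 2)) : c ≤ a + b := by
  simp only [ne_eq, Prod.mk.injEq] at hne
  rcases mem_P_iff.mp hP with ⟨-, hca, -⟩ | ⟨hc, rfl, rfl⟩ <;> omega

theorem not_both_preimages_in_P_general (a b c : ℤ)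
    (hne : ((a, b, c) : ℤ × ℤ × ℤ) ≠ (1, 1, 2)) :
    ¬(((a, b, c - a) : ℤ × ℤ × ℤ) ∈ P ∧ ((c - b, a, b) : ℤ × ℤ × ℤ) ∈ P) := by
  rintro ⟨hA₁, hA₀⟩
  exact (add_lt_of_mem_P_of_ne hA₁ hne).not_ge (le_add_of_mem_P_of_ne hA₀ hne)

/-- If `(a,b,c) ∈ P` and `(a,b,c) ≠ (1,1,2)`, then at most one of
`(a,b,c)·A₁⁻¹ = (a,b,c−a)` and `(a,b,c)·A₀⁻¹ = (c−b,a,b)` lies in `P`. -/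
theorem not_both_preimages_in_P (a b c : ℤ)
    (h : ((a, b, c) : ℤ × ℤ × ℤ) ∈ P)
    (hne : ((a, b, c) : ℤ × ℤ × ℤ) ≠ (1, 1, 2)) :
    ¬(((a, b, c - a) : ℤ × ℤ × ℤ) ∈ P ∧ ((c - b, a, b) : ℤ × ℤ × ℤ) ∈ P) :=
  not_both_preimages_in_P_general a b c hne
end

section
/- Define G : ℤ³ → ℤ³ by G(a,b,c) = (a,b,c−a) if a + b < c, and G(a,b,c) = (c−b,a,b) otherwise. Then for every X = (a,b,c) ∈ P, one has G(X·A₀) = X and G(X·A₁) = X; explicitly, G(b,c,a+c) = (a,b,c) and G(a,b,a+c) = (a,b,c). -/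
/-- The inverse map `G`: `G(a,b,c) = (a,b,c−a)` if `a + b < c`,
and `G(a,b,c) = (c−b,a,b)` otherwise. -/
def G (p : ℤ × ℤ × ℤ) : ℤ × ℤ × ℤ :=
  if p.1 + p.2.1 < p.2.2 then (p.1, p.2.1, p.2.2 - p.1)
  else (p.2.2 - p.2.1, p.1, p.2.1)

theorem G_of_lt {a b c : ℤ} (h : a + b < c) : G (a, b, c) = (a, b, c - a) :=
  if_pos h

theorem G_of_le {a b c : ℤ} (h : c ≤ a + b) : G (a, b, c) = (c - b, a, b) :=
  if_neg h.not_gt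

theorem G_mulA₀_of_le {a b c : ℤ} (h : a ≤ b) : G (b, c, a + c) = (a, b, c) := by
  rw [G_of_le (by omega), add_sub_cancel_right]

theorem G_mulA₁_of_lt {a b c : ℤ} (h : b < c) : G (a, b, a + c) = (a, b, c) := by
  rw [G_of_lt (by omega), add_sub_cancel_left]

theorem G_mulA₁_of_eq {a : ℤ} : G (a, a, a + a) = (a, a, a) := by
  rw [G_of_le le_rfl, add_sub_cancel_right]

/-- For every `X = (a,b,c) ∈ P`, `G(X·A₀) = X` and `G(X·A₁) = X`; explicitly,
`G(b,c,a+c) = (a,b,c)` and `G(a,b,a+c) = (a,b,c)`. -/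
theorem G_leftInverse (a b c : ℤ) (h : ((a, b, c) : ℤ × ℤ × ℤ) ∈ P) :
    G (b, c, a + c) = (a, b, c) ∧ G (a, b, a + c) = (a, b, c) := by
  rcases h with ⟨-, hab, hbc⟩ | h
  · exact ⟨G_mulA₀_of_le hab, G_mulA₁_of_lt hbc⟩
  · obtain ⟨rfl, rfl, rfl⟩ : a = 1 ∧ b = 1 ∧ c = 1 := by simpa using h
    exact ⟨G_mulA₀_of_le le_rfl, G_mulA₁_of_eq⟩
end

section
/- No germ except (1,1,1) lies in the TRIP-Stern sequence for (e,e,e): if a and b are integers with 0 < a < b < 2a, then the triple (a,a,b) does not appear in the TRIP-Stern sequence for (e,e,e), i.e., there is no finite word v in {0,1} with Δ(v) = (a,a,b). -/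
/-! The image of the root under any word lies in `P` and is not a germ other than `(1,1,1)`:
both steps preserve this, since a germ `(a,a,b)` could only come from `(a,a,b-a)` by `f₁`, where
`b - a < a` breaks the ordering, or from `(b-a,a,a)` by `f₀`, which lies in `P` only if it is
`(1,1,1)`, forcing `b = 2a`. -/

/-- Membership in the set `P` of the paper. -/
def MemP (p : ℤ × ℤ × ℤ) : Prop :=
  (0 < p.1 ∧ p.1 ≤ p.2.1 ∧ p.2.1 < p.2.2) ∨ p = (1, 1, 1)

def IsProperGerm (p : ℤ × ℤ × ℤ) : Prop :=
  p.1 = p.2.1 ∧ p.1 < p.2.2 ∧ p.2.2 < 2 * p.1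

def IsNonGermP (p : ℤ × ℤ × ℤ) : Prop :=
  MemP p ∧ ¬ IsProperGerm p

lemma IsNonGermP.f0 {p : ℤ × ℤ × ℤ} (h : IsNonGermP p) : IsNonGermP (f0 p) := by
  obtain ⟨x, y, z⟩ := p
  simp only [IsNonGermP, MemP, IsProperGerm, _root_.f0, Prod.mk.injEq] at h ⊢
  omega

lemma IsNonGermP.f1 {p : ℤ × ℤ × ℤ} (h : IsNonGermP p) : IsNonGermP (f1 p) := by
  obtain ⟨x, y, z⟩ := p
  simp only [IsNonGermP, MemP, IsProperGerm, _root_.f1, Prod.mk.injEq] at h ⊢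
  omega

lemma IsNonGermP.foldl_step {p : ℤ × ℤ × ℤ} (h : IsNonGermP p) (v : List Bool) :
    IsNonGermP (v.foldl step p) := by
  induction v generalizing p with
  | nil => exact h
  | cons i w ih =>
    apply ih
    cases i
    · exact h.f0
    · exact h.f1

lemma isNonGermP_delta (v : List Bool) : IsNonGermP (delta v) :=
  IsNonGermP.foldl_step ⟨Or.inr rfl, by simp [IsProperGerm]⟩ v

theorem germ_not_in_tripStern_general (a b : ℤ) (hab : a < b) (hb : b < 2 * a) :
    ∀ v : List Bool, delta v ≠ (a, a, b) := fun v h =>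
  (isNonGermP_delta v).2 (h ▸ ⟨rfl, hab, hb⟩)

/-- No germ except `(1,1,1)` lies in the TRIP-Stern sequence for `(e,e,e)`: if
`0 < a < b < 2a` then the triple `(a,a,b)` does not appear, i.e. there is no finite
word `v` in `{0,1}` with `Δ(v) = (a,a,b)`. -/
theorem germ_not_in_tripStern (a b : ℤ) (ha : 0 < a) (hab : a < b) (hb : b < 2 * a) :
    ∀ v : List Bool, delta v ≠ (a, a, b) :=
  germ_not_in_tripStern_general a b hab hb
end
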